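/- arXiv:1007.5421 — 4 statements merged into one kernel-verified Lean document; each statement's English description precedes it below -/
import Mathlib

section
/- If each transition and emission distribution of an HMM sums to 1, then for any constraint C and any fixed run length n, the total probability of all CHMM runs of length n is at most 1, with equality if and only if C holds on every HMM run of length n that has positive probability. -/
def runProb {S A : Type} (T : S → S → ℝ) (Em : S → A → ℝ) (n : ℕ)
    (st : Fin (n + 1) → S) (e : Fin n → A) : ℝ :=
  ∏ i : Fin n, T (st i.castSucc) (st i.succ) * Em (st i.succ) (e i)

/-- `r` (a choice of states after the initial state `s0`, together with emissions)
is a run of the HMM: all used transition and emission probabilities are strictly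
positive (equivalently, the run has positive probability). -/
def IsRunQ {S A : Type} (s0 : S) (T : S → S → ℝ) (Em : S → A → ℝ) (n : ℕ)
    (r : (Fin n → S) × (Fin n → A)) : Prop :=
  (∀ i : Fin n, 0 < T (Fin.cases s0 r.1 i.castSucc) (r.1 i)) ∧
    ∀ i : Fin n, 0 < Em (r.1 i) (r.2 i)

/-! Summing out the first step shows by induction on `n` that the run probabilities of all
state/emission sequences add up to 1, and a sequence has positive probability exactly when it
is an HMM run. The CHMM total is therefore the mass of a sub-event of a probability
distribution: at most 1, with equality iff the excluded sequences all have probability 0. -/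

open Finset

theorem Finset.sum_filter_eq_sum_iff_of_nonneg {ι M : Type*} [Fintype ι] [AddCommMonoid M]
    [PartialOrder M] [IsOrderedCancelAddMonoid M] {f : ι → M}
    (hf : ∀ i, 0 ≤ f i) (p : ι → Prop) [DecidablePred p] :
    ∑ i ∈ univ.filter p, f i = ∑ i, f i ↔ ∀ i, 0 < f i → p i := by
  rw [← sum_filter_add_sum_filter_not univ p f, left_eq_add,
    sum_eq_zero_iff_of_nonneg fun i _ => hf i]
  refine forall_congr' fun i => ?_
  rw [mem_filter, (hf i).lt_iff_ne', and_iff_right (mem_univ i)]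
  exact not_imp_comm

section Runs

variable {S A : Type} (T : S → S → ℝ) (Em : S → A → ℝ)

theorem runProb_cases_cons {n : ℕ} (s0 s : S) (a : A) (t : Fin n → S) (e : Fin n → A) :
    runProb T Em (n + 1) (Fin.cases s0 (Fin.cons s t)) (Fin.cons a e)
      = T s0 s * Em s a * runProb T Em n (Fin.cases s t) e := by
  simp only [runProb, Fin.prod_univ_succ, mul_assoc, Fin.castSucc_zero, Fin.cases_zero,
    Fin.cases_succ, Fin.cons_zero, Fin.cons_succ, ← Fin.succ_castSucc]
  -- `Fin.cons s t` and `Fin.cases s t` are the same function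
  rfl

theorem runProb_nonneg (hT0 : ∀ s s' : S, 0 ≤ T s s') (hE0 : ∀ (s : S) (a : A), 0 ≤ Em s a)
    {n : ℕ} (st : Fin (n + 1) → S) (e : Fin n → A) : 0 ≤ runProb T Em n st e :=
  prod_nonneg fun _ _ => mul_nonneg (hT0 _ _) (hE0 _ _)

theorem runProb_pos_iff_isRunQ (hT0 : ∀ s s' : S, 0 ≤ T s s')
    (hE0 : ∀ (s : S) (a : A), 0 ≤ Em s a) {n : ℕ} (s0 : S) (r : (Fin n → S) × (Fin n → A)) :
    0 < runProb T Em n (Fin.cases s0 r.1) r.2 ↔ IsRunQ s0 T Em n r := by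
  rw [(runProb_nonneg T Em hT0 hE0 _ _).lt_iff_ne']
  simp only [runProb, prod_ne_zero_iff, mem_univ, true_imp_iff, mul_ne_zero_iff, forall_and,
    IsRunQ, (hT0 _ _).lt_iff_ne', (hE0 _ _).lt_iff_ne', Fin.cases_succ]

theorem sum_runProb_eq_one [Fintype S] [Fintype A]
    (hT1 : ∀ s : S, ∑ s' : S, T s s' = 1) (hE1 : ∀ s : S, ∑ a : A, Em s a = 1) (n : ℕ) (s0 : S) :
    ∑ r : (Fin n → S) × (Fin n → A), runProb T Em n (Fin.cases s0 r.1) r.2 = 1 := by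
  induction n generalizing s0 with
  | zero => simp [runProb]
  | succ n ih =>
    let cons : (S × A) × (Fin n → S) × (Fin n → A) ≃ (Fin (n + 1) → S) × (Fin (n + 1) → A) :=
      (Equiv.prodProdProdComm S A _ _).trans
        ((Fin.consEquiv fun _ => S).prodCongr (Fin.consEquiv fun _ => A))
    calc ∑ r : (Fin (n + 1) → S) × (Fin (n + 1) → A), runProb T Em (n + 1) (Fin.cases s0 r.1) r.2
        = ∑ x : S × A, T s0 x.1 * Em x.1 x.2 *
            ∑ r : (Fin n → S) × (Fin n → A), runProb T Em n (Fin.cases x.1 r.1) r.2 := by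
          rw [← cons.sum_comp, Fintype.sum_prod_type]
          simp only [mul_sum]
          exact sum_congr rfl fun x _ => sum_congr rfl fun r _ =>
            runProb_cases_cons T Em s0 x.1 x.2 r.1 r.2
      _ = ∑ s, T s0 s * ∑ a, Em s a := by
          simp only [ih, mul_one, Fintype.sum_prod_type, mul_sum]
      _ = 1 := by simp only [hE1, mul_one, hT1]

end Runs

open Classical in
theorem chmm_total_prob_le_one_iff {S A : Type} [Fintype S] [Fintype A]
    (s0 : S) (T : S → S → ℝ) (Em : S → A → ℝ) (n : ℕ)
    (hT0 : ∀ s s' : S, 0 ≤ T s s') (hE0 : ∀ (s : S) (a : A), 0 ≤ Em s a)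
    (hT1 : ∀ s : S, ∑ s' : S, T s s' = 1) (hE1 : ∀ s : S, ∑ a : A, Em s a = 1)
    (C : (Fin n → S) × (Fin n → A) → Prop) :
    ∑ r ∈ Finset.univ.filter (fun r => IsRunQ s0 T Em n r ∧ C r),
        runProb T Em n (Fin.cases s0 r.1) r.2 ≤ 1 ∧
    ((∑ r ∈ Finset.univ.filter (fun r => IsRunQ s0 T Em n r ∧ C r),
        runProb T Em n (Fin.cases s0 r.1) r.2) = 1 ↔
      ∀ r : (Fin n → S) × (Fin n → A), IsRunQ s0 T Em n r → C r) := by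
  have hnonneg := fun r : (Fin n → S) × (Fin n → A) =>
    runProb_nonneg T Em hT0 hE0 (Fin.cases s0 r.1) r.2
  have htotal := sum_runProb_eq_one T Em hT1 hE1 n s0
  refine ⟨htotal ▸ sum_le_univ_sum_of_nonneg hnonneg, ?_⟩
  rw [← htotal, sum_filter_eq_sum_iff_of_nonneg hnonneg]
  simp only [runProb_pos_iff_isRunQ T Em hT0 hE0]
  exact forall_congr' fun r => ⟨fun h hr => (h hr).2, fun h hr => ⟨hr, h hr⟩⟩
end

section
/- Correctness of constrained Viterbi via decomposable constraints: suppose the constraint C is prefix-closed in the sense that there is a monotone satisfiability predicate sat on (partial path, index) pairs such that C holds on a full path iff sat holds at every index, and sat at index i+1 depends only on sat at index i and the (i+1)-st state. Define V_C(i, σ, s) as the maximal accumulated probability over partial paths of length i ending in s with constraint-state σ. Then the maximum of V_C(n, σ_acc, s) over states s and accepting constraint-states σ_acc equals the maximal probability of any full constrained run for the observation. -/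
/-- Accumulated probability of a (partial or full) path `π` from current state `s`,
consuming the emissions `es` (zero if the lengths mismatch). -/
def accProb {S A : Type} (T : S → S → ℝ) (Em : S → A → ℝ) :
    S → List S → List A → ℝ
  | _, [], [] => 1
  | s, s' :: π, a :: es => T s s' * Em s' a * accProb T Em s' π es
  | _, _, _ => 0

/-- Run the deterministic constraint automaton `δ` from `σ0` along a path/observation
pair; `none` represents failure. -/
def autRun {Q S A : Type} (δ : Q → S → A → Option Q) (σ0 : Q)
    (l : List (S × A)) : Option Q :=
  l.foldl (fun oσ u => oσ.bind fun σ => δ σ u.1 u.2) (some σ0)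

/-- `VC obs i σ s` = maximal accumulated probability over partial paths of length `i`
ending in HMM state `s` (the empty path ends in `s0`) whose constraint-automaton state
is `σ`; `0` if no such path exists. -/
noncomputable def VC {Q S A : Type} (T : S → S → ℝ) (Em : S → A → ℝ)
    (δ : Q → S → A → Option Q) (σ0 : Q) (s0 : S)
    (obs : List A) (i : ℕ) (σ : Q) (s : S) : ℝ :=
  sSup ({0} ∪ {x | ∃ π : List S, π.length = i ∧ π.getLastD s0 = s ∧
    autRun δ σ0 (π.zip (obs.take i)) = some σ ∧
    x = accProb T Em s0 π (obs.take i)})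

/-! Every accepted full run lands in exactly one cell `(s, σ)` of the table, namely its last
HMM state and its final automaton state, so the supremum over accepting cells of the per-cell
suprema `VC` is a supremum of suprema over a partition of the accepted runs. With a finite state
space there are finitely many paths of each length, so every set involved is bounded, which is
what suprema in `ℝ` need to behave. -/

open Set

theorem csSup_insert_range_csSup_insert {α ι : Type*} [ConditionallyCompleteLattice α]
    (a : α) (t : ι → Set α) (ht : BddAbove (⋃ i, t i)) :
    sSup (insert a (range fun i => sSup (insert a (t i)))) = sSup (insert a (⋃ i, t i)) := by
  have hbdd : BddAbove (insert a (⋃ i, t i)) := ht.insert a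
  have hcell : ∀ i, sSup (insert a (t i)) ≤ sSup (insert a (⋃ i, t i)) := fun i =>
    csSup_le_csSup hbdd (insert_nonempty _ _) (insert_subset_insert (subset_iUnion t i))
  have hbdd' : BddAbove (insert a (range fun i => sSup (insert a (t i)))) :=
    ⟨sSup (insert a (⋃ i, t i)), by
      rintro x (rfl | ⟨i, rfl⟩)
      · exact le_csSup hbdd (mem_insert _ _)
      · exact hcell i⟩
  apply le_antisymm
  · refine csSup_le (insert_nonempty _ _) ?_
    rintro x (rfl | ⟨i, rfl⟩)
    · exact le_csSup hbdd (mem_insert _ _)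
    · exact hcell i
  · refine csSup_le (insert_nonempty _ _) ?_
    rintro x (rfl | hx)
    · exact le_csSup hbdd' (mem_insert _ _)
    · obtain ⟨i, hi⟩ := mem_iUnion.mp hx
      calc x ≤ sSup (insert a (t i)) := le_csSup ((ht.mono (subset_iUnion t i)).insert a)
              (mem_insert_of_mem _ hi)
        _ ≤ _ := le_csSup hbdd' (mem_insert_of_mem _ ⟨i, rfl⟩)

theorem bddAbove_accProb_length_eq {S A : Type} [Finite S] (T : S → S → ℝ) (Em : S → A → ℝ)
    (s0 : S) (es : List A) (n : ℕ) :
    BddAbove ((fun π => accProb T Em s0 π es) '' {π : List S | π.length = n}) :=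
  ((List.finite_length_eq S n).image _).bddAbove

section Runs

variable {Q S A : Type} (T : S → S → ℝ) (Em : S → A → ℝ) (δ : Q → S → A → Option Q)
  (σ0 : Q) (s0 : S) (obs : List A)

def runProbsEndingAt (s : S) (σ : Q) : Set ℝ :=
  {x | ∃ π : List S, π.length = obs.length ∧ π.getLastD s0 = s ∧
    autRun δ σ0 (π.zip obs) = some σ ∧ x = accProb T Em s0 π obs}

theorem VC_length_eq (σ : Q) (s : S) :
    VC T Em δ σ0 s0 obs obs.length σ s = sSup (insert 0 (runProbsEndingAt T Em δ σ0 s0 obs s σ)) := by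
  rw [VC, List.take_length, singleton_union, runProbsEndingAt]

theorem iUnion_runProbsEndingAt (F : Set Q) :
    ⋃ c : S × F, runProbsEndingAt T Em δ σ0 s0 obs c.1 c.2 =
      {x | ∃ π : List S, π.length = obs.length ∧
        (∃ σacc ∈ F, autRun δ σ0 (π.zip obs) = some σacc) ∧ x = accProb T Em s0 π obs} := by
  ext x
  simp only [runProbsEndingAt, mem_iUnion, mem_ofPred_eq, Prod.exists, Subtype.exists]
  constructor
  · rintro ⟨s, σ, hσ, π, hlen, -, hrun, rfl⟩
    exact ⟨π, hlen, ⟨σ, hσ, hrun⟩, rfl⟩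
  · rintro ⟨π, hlen, ⟨σ, hσ, hrun⟩, rfl⟩
    exact ⟨π.getLastD s0, σ, hσ, π, hlen, rfl, hrun, rfl⟩

end Runs

theorem constrained_viterbi_correct_general {Q S A : Type} [Fintype S]
    (T : S → S → ℝ) (Em : S → A → ℝ)
    (δ : Q → S → A → Option Q) (σ0 : Q) (F : Set Q) (s0 : S)
    (obs : List A) :
    sSup ({0} ∪ {x | ∃ (s : S) (σacc : Q), σacc ∈ F ∧
        x = VC T Em δ σ0 s0 obs obs.length σacc s}) =
      sSup ({0} ∪ {x | ∃ π : List S, π.length = obs.length ∧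
        (∃ σacc ∈ F, autRun δ σ0 (π.zip obs) = some σacc) ∧
        x = accProb T Em s0 π obs}) := by
  set cell := fun c : S × F => runProbsEndingAt T Em δ σ0 s0 obs c.1 c.2
  have hbdd : BddAbove (⋃ c, cell c) := by
    refine (bddAbove_accProb_length_eq T Em s0 obs obs.length).mono ?_
    rw [iUnion_runProbsEndingAt]
    rintro x ⟨π, hlen, -, rfl⟩
    exact ⟨π, hlen, rfl⟩
  have hVC : {x | ∃ (s : S) (σacc : Q), σacc ∈ F ∧ x = VC T Em δ σ0 s0 obs obs.length σacc s} =
      range fun c => sSup (insert 0 (cell c)) := by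
    ext x
    simp [cell, VC_length_eq, eq_comm]
  rw [singleton_union, singleton_union, hVC, ← iUnion_runProbsEndingAt]
  exact csSup_insert_range_csSup_insert 0 cell hbdd

theorem constrained_viterbi_correct {Q S A : Type} [Fintype S] [Fintype Q]
    (T : S → S → ℝ) (Em : S → A → ℝ)
    (hT0 : ∀ s s' : S, 0 ≤ T s s') (hE0 : ∀ (s : S) (a : A), 0 ≤ Em s a)
    (δ : Q → S → A → Option Q) (σ0 : Q) (F : Set Q) (s0 : S)
    (obs : List A) :
    sSup ({0} ∪ {x | ∃ (s : S) (σacc : Q), σacc ∈ F ∧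
        x = VC T Em δ σ0 s0 obs obs.length σacc s}) =
      sSup ({0} ∪ {x | ∃ π : List S, π.length = obs.length ∧
        (∃ σacc ∈ F, autRun δ σ0 (π.zip obs) = some σacc) ∧
        x = accProb T Em s0 π obs}) :=
  constrained_viterbi_correct_general T Em δ σ0 F s0 obs
end

section
/- Incremental correctness of the cardinality_atmost checker: the incremental checker that maintains a counter, increments it on each occurrence of the designated value and fails when the counter exceeds Max, accepts a sequence (processed element by element) if and only if the sequence contains at most Max occurrences of the designated value; moreover it fails on a prefix iff no extension of that prefix can satisfy the constraint. -/
/-! From a store `c ≤ Max` the checker computes `c + count X L` and fails exactly when this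
exceeds `Max`. Since counts only grow when a list is extended, a prefix the checker rejects
cannot be rescued, while an accepted prefix is a witness for the empty extension. -/

/-- One step of the incremental cardinality_atmost checker: the store is a counter,
incremented on each occurrence of the designated value `X`, failing when the counter
would exceed `Max`. -/
def cardStep {α : Type} [DecidableEq α] (X : α) (Max : ℕ) (c : ℕ) (u : α) :
    Option ℕ :=
  if u = X then (if c + 1 ≤ Max then some (c + 1) else none) else some c

/-- Process a list element by element, folding the checker from store `c`. -/
def runChecker {α : Type} [DecidableEq α] (X : α) (Max : ℕ) (c : ℕ) (L : List α) :
    Option ℕ :=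
  L.foldl (fun oc u => oc.bind fun c' => cardStep X Max c' u) (some c)

section Checker

variable {α : Type} [DecidableEq α] (X : α) (Max : ℕ)

lemma foldl_cardStep_none (L : List α) :
    L.foldl (fun oc u => oc.bind fun c' => cardStep X Max c' u) none = none := by
  induction L with
  | nil => rfl
  | cons _ _ ih => exact ih

lemma runChecker_cons (c : ℕ) (a : α) (L : List α) :
    runChecker X Max c (a :: L) =
      (cardStep X Max c a).bind fun c' => runChecker X Max c' L := by
  cases h : cardStep X Max c a with
  | none => simp [runChecker, h, foldl_cardStep_none]
  | some c' => simp only [runChecker, List.foldl_cons, Option.bind_some, h]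

/-- The invariant `c ≤ Max` is needed: from an overfull store the checker still accepts
lists without occurrences of `X`. -/
theorem runChecker_eq_ite {c : ℕ} (hc : c ≤ Max) (L : List α) :
    runChecker X Max c L =
      if c + L.count X ≤ Max then some (c + L.count X) else none := by
  induction L generalizing c with
  | nil => simp [runChecker, hc]
  | cons a L ih =>
    rw [runChecker_cons]
    by_cases ha : a = X
    · subst ha
      by_cases hc' : c + 1 ≤ Max
      · simp only [cardStep, if_pos, hc', Option.bind_some, ih hc', List.count_cons_self]
        rw [show c + 1 + L.count a = c + (L.count a + 1) by omega]
      · have hover : ¬ c + (L.count a + 1) ≤ Max := by omega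
        simp [cardStep, hc', hover]
    · simp [cardStep, ha, ih hc]

end Checker

theorem cardinality_checker_correct {α : Type} [DecidableEq α]
    (X : α) (Max : ℕ) :
    (∀ L : List α, (runChecker X Max 0 L).isSome ↔ L.count X ≤ Max) ∧
    (∀ P : List α, runChecker X Max 0 P = none ↔
      ∀ L' : List α, ¬ ((P ++ L').count X ≤ Max)) := by
  have hrun (L : List α) := runChecker_eq_ite X Max (Nat.zero_le Max) L
  simp only [zero_add] at hrun
  refine ⟨fun L => ?_, fun P => ?_⟩
  · rw [hrun]
    split_ifs with h <;> simpa using h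
  · have hprefix : (∀ L' : List α, ¬ (P ++ L').count X ≤ Max) ↔ ¬ P.count X ≤ Max :=
      ⟨fun h => by simpa using h [], fun h L' => by rw [List.count_append]; omega⟩
    rw [hrun, hprefix]
    split_ifs with h <;> simpa using h
end

section
/- Termination of the constrained Viterbi rewriting system: starting from the initial singleton set of 5-tuples, the rewriting system with rules trans_ctr (which only adds tuples with strictly larger index, bounded by n, and state from the finite set S) and prune_ctr (which removes tuples) terminates: no infinite sequence of rule applications exists when tuples are identified by (state, index, partial path) and partial paths have length bounded by n. -/
/-!
Order configurations lexicographically: first by the set of tuples added so far, under reverse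
inclusion, then by the current set, under inclusion. `trans_ctr` strictly enlarges the set of
added tuples, which can happen only finitely often since `Tuple` is finite, and `prune_ctr` keeps
it and strictly shrinks the current set. Both orders are well founded, hence so is the rewriting
relation.
-/

theorem wellFounded_of_grow_snd_or_shrink_fst {α β : Type*} [Preorder α] [Preorder β]
    [WellFoundedLT α] [WellFoundedGT β] (R : α × β → α × β → Prop)
    (hR : ∀ p q, R q p → p.2 < q.2 ∨ q.1 < p.1 ∧ q.2 = p.2) :
    WellFounded R := by
  refine Subrelation.wf (fun {q p} hqp => ?_)
    (InvImage.wf (fun p : α × β => (p.2, p.1)) (wellFounded_gt.prod_lex wellFounded_lt))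
  rcases hR p q hqp with hgrow | ⟨hshrink, hsnd⟩
  · exact Prod.Lex.left _ _ hgrow
  · simp only [InvImage, hsnd]
    exact Prod.Lex.right _ hshrink

theorem constrained_viterbi_terminates {Tuple : Type} [Fintype Tuple]
    [DecidableEq Tuple]
    (Rel : Finset Tuple × Finset Tuple → Finset Tuple × Finset Tuple → Prop)
    (hRel : ∀ p q : Finset Tuple × Finset Tuple,
      Rel q p ↔
        (∃ t : Tuple, t ∉ p.2 ∧ q.1 = insert t p.1 ∧ q.2 = insert t p.2) ∨
        (q.1 ⊂ p.1 ∧ q.2 = p.2)) :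
    ¬ ∃ f : ℕ → Finset Tuple × Finset Tuple, ∀ k : ℕ, Rel (f (k + 1)) (f k) := by
  have hwf : WellFounded Rel := by
    refine wellFounded_of_grow_snd_or_shrink_fst Rel fun p q hqp => ?_
    rcases (hRel p q).mp hqp with ⟨t, ht, -, hadd⟩ | hprune
    · exact Or.inl (hadd ▸ Finset.ssubset_insert ht)
    · exact Or.inr hprune
  rintro ⟨f, hf⟩
  exact (wellFounded_iff_isEmpty_descending_chain.mp hwf).elim ⟨f, hf⟩
end
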